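/- arXiv:math-ph/0612005 — 3 statements merged into one kernel-verified Lean document; each statement's English description precedes it below -/
import Mathlib

section
/- Let σ(t) = e^{−2κt} ∑_{m=1}^∞ (wt)^{2m}/(m!)² with w > 0. If κ ≥ w then sup_{t ≥ 0} σ(t) < ∞, and if κ < w then σ(t) → ∞ as t → ∞. In particular lim sup_{t→∞} σ(t) < ∞ if and only if κ ≥ w. -/
open Real Filter

/-! Since `4 ^ n / (2n + 1) ≤ C(2n, n) ≤ 4 ^ n`, the series `∑ x^(2n)/(n!)² = I₀(2x)` is squeezed
termwise between the series of `sinh (2x) / (2x)` and of `cosh (2x)`. Hence `σ t` lies between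
`e^(2(w - κ)t) / (8wt)` (for large `t`) and `e^(2(w - κ)t)`. -/

namespace Nat

theorem factorial_two_mul_eq_centralBinom_mul (n : ℕ) : (2 * n)! = centralBinom n * n ! ^ 2 := by
  rw [centralBinom, two_mul, ← add_choose_mul_factorial_mul_factorial, sq, mul_assoc]

theorem four_pow_le_two_mul_add_one_mul_centralBinom (n : ℕ) :
    4 ^ n ≤ (2 * n + 1) * centralBinom n :=
  calc 4 ^ n = ∑ r ∈ Finset.range (2 * n + 1), (2 * n).choose r := by
        rw [sum_range_choose, pow_mul]; rfl
    _ ≤ ∑ _r ∈ Finset.range (2 * n + 1), centralBinom n :=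
        Finset.sum_le_sum fun r _ => choose_le_centralBinom r n
    _ = (2 * n + 1) * centralBinom n := by simp

theorem factorial_two_mul_le_four_pow_mul_factorial_sq (n : ℕ) : (2 * n)! ≤ 4 ^ n * n ! ^ 2 := by
  rw [factorial_two_mul_eq_centralBinom_mul]
  gcongr
  exact centralBinom_le_four_pow n

theorem four_pow_mul_factorial_sq_le_factorial_two_mul_add_one (n : ℕ) :
    4 ^ n * n ! ^ 2 ≤ (2 * n + 1)! := by
  rw [factorial_succ, factorial_two_mul_eq_centralBinom_mul, ← mul_assoc]
  gcongr
  exact four_pow_le_two_mul_add_one_mul_centralBinom n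

end Nat

open Nat

theorem pow_two_mul_div_factorial_sq_le (x : ℝ) (n : ℕ) :
    x ^ (2 * n) / (n ! : ℝ) ^ 2 ≤ (2 * x) ^ (2 * n) / (2 * n)! := by
  have hfact : ((2 * n)! : ℝ) ≤ 4 ^ n * (n ! : ℝ) ^ 2 := by
    exact_mod_cast factorial_two_mul_le_four_pow_mul_factorial_sq n
  rw [mul_pow, pow_mul 2, show (2 : ℝ) ^ 2 = 4 by norm_num,
    div_le_div_iff₀ (by positivity) (by positivity)]
  have hx : 0 ≤ x ^ (2 * n) := (even_two_mul n).pow_nonneg x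
  nlinarith [mul_le_mul_of_nonneg_left hfact hx]

theorem pow_two_mul_div_factorial_le_div_factorial_sq (x : ℝ) (n : ℕ) :
    (2 * x) ^ (2 * n) / (2 * n + 1)! ≤ x ^ (2 * n) / (n ! : ℝ) ^ 2 := by
  have hfact : 4 ^ n * (n ! : ℝ) ^ 2 ≤ (2 * n + 1)! := by
    exact_mod_cast four_pow_mul_factorial_sq_le_factorial_two_mul_add_one n
  rw [mul_pow, pow_mul 2, show (2 : ℝ) ^ 2 = 4 by norm_num,
    div_le_div_iff₀ (by positivity) (by positivity)]
  have hx : 0 ≤ x ^ (2 * n) := (even_two_mul n).pow_nonneg x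
  nlinarith [mul_le_mul_of_nonneg_left hfact hx]

-- `besselI0TwoMul x = I₀(2x)`, with `I₀` the modified Bessel function of the first kind.
noncomputable def besselI0TwoMul (x : ℝ) : ℝ := ∑' n : ℕ, x ^ (2 * n) / (n ! : ℝ) ^ 2

theorem summable_besselI0TwoMul (x : ℝ) : Summable fun n : ℕ => x ^ (2 * n) / (n ! : ℝ) ^ 2 :=
  (hasSum_cosh (2 * x)).summable.of_nonneg_of_le
    (fun n => div_nonneg ((even_two_mul n).pow_nonneg x) (by positivity))
    (pow_two_mul_div_factorial_sq_le x)

theorem besselI0TwoMul_le_cosh (x : ℝ) : besselI0TwoMul x ≤ cosh (2 * x) :=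
  hasSum_le (pow_two_mul_div_factorial_sq_le x) (summable_besselI0TwoMul x).hasSum
    (hasSum_cosh (2 * x))

theorem sinh_div_le_besselI0TwoMul {x : ℝ} (hx : x ≠ 0) :
    sinh (2 * x) / (2 * x) ≤ besselI0TwoMul x := by
  have hsinh :
      HasSum (fun n : ℕ => (2 * x) ^ (2 * n) / (2 * n + 1)!) (sinh (2 * x) / (2 * x)) := by
    refine ((hasSum_sinh (2 * x)).div_const (2 * x)).congr_fun fun n => ?_
    field_simp
    ring
  exact hasSum_le (pow_two_mul_div_factorial_le_div_factorial_sq x) hsinh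
    (summable_besselI0TwoMul x).hasSum

theorem tsum_succ_eq_besselI0TwoMul_sub_one (x : ℝ) :
    ∑' m : ℕ, x ^ (2 * (m + 1)) / ((m + 1)! : ℝ) ^ 2 = besselI0TwoMul x - 1 := by
  rw [besselI0TwoMul, (summable_besselI0TwoMul x).tsum_eq_zero_add]
  simp

theorem exp_div_four_le_sinh_sub_self {y : ℝ} (hy : 7 ≤ y) : exp y / 4 ≤ sinh y - y := by
  have hquad := quadratic_le_exp_of_nonneg (by linarith : 0 ≤ y)
  have hneg : exp (-y) ≤ 1 := exp_le_one_iff.mpr (by linarith)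
  rw [sinh_eq]
  nlinarith

theorem exp_mul_besselI0TwoMul_sub_one_le_one {κ w t : ℝ} (hw : 0 ≤ w) (hκ : w ≤ κ) (ht : 0 ≤ t) :
    exp (-2 * κ * t) * (besselI0TwoMul (w * t) - 1) ≤ 1 := by
  have hcosh : cosh (2 * (w * t)) ≤ exp (2 * (w * t)) := by
    have : exp (-(2 * (w * t))) ≤ exp (2 * (w * t)) := exp_le_exp.2 (by nlinarith)
    rw [cosh_eq]
    linarith
  calc exp (-2 * κ * t) * (besselI0TwoMul (w * t) - 1)
      ≤ exp (-2 * κ * t) * exp (2 * (w * t)) := by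
        gcongr
        linarith [besselI0TwoMul_le_cosh (w * t)]
    _ = exp (2 * (w - κ) * t) := by rw [← exp_add]; ring_nf
    _ ≤ 1 := exp_le_one_iff.2 (by nlinarith)

theorem tendsto_exp_mul_besselI0TwoMul_sub_one_atTop {κ w : ℝ} (hw : 0 < w) (hκ : κ < w) :
    Tendsto (fun t => exp (-2 * κ * t) * (besselI0TwoMul (w * t) - 1)) atTop atTop := by
  have hlim : Tendsto (fun t => exp (2 * (w - κ) * t) / t ^ (1 : ℝ) / (8 * w)) atTop atTop :=
    (tendsto_exp_mul_div_rpow_atTop 1 _ (by linarith)).atTop_div_const (by positivity)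
  refine tendsto_atTop_mono' atTop ?_ hlim
  filter_upwards [eventually_ge_atTop (7 / (2 * w))] with t ht
  have hy : 7 ≤ 2 * (w * t) := by
    rw [div_le_iff₀ (by positivity)] at ht
    linarith
  have hwt : 0 < w * t := by linarith
  calc exp (2 * (w - κ) * t) / t ^ (1 : ℝ) / (8 * w)
      = exp (-2 * κ * t) * (exp (2 * (w * t)) / 4 / (2 * (w * t))) := by
        rw [show 2 * (w - κ) * t = -2 * κ * t + 2 * (w * t) by ring, exp_add, rpow_one]
        field_simp
        ring
    _ ≤ exp (-2 * κ * t) * ((sinh (2 * (w * t)) - 2 * (w * t)) / (2 * (w * t))) := by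
        gcongr
        exact exp_div_four_le_sinh_sub_self hy
    _ = exp (-2 * κ * t) * (sinh (2 * (w * t)) / (2 * (w * t)) - 1) := by
        rw [sub_div, div_self (by positivity)]
    _ ≤ exp (-2 * κ * t) * (besselI0TwoMul (w * t) - 1) := by
        gcongr
        exact sinh_div_le_besselI0TwoMul hwt.ne'

theorem limsup_ofReal_lt_top_of_eventually_le {α : Type*} {l : Filter α} {f : α → ℝ} {M : ℝ}
    (h : ∀ᶠ x in l, f x ≤ M) : limsup (fun x => ENNReal.ofReal (f x)) l < ⊤ :=
  (limsup_le_of_le (by isBoundedDefault) (h.mono fun _ hx => ENNReal.ofReal_le_ofReal hx)).trans_lt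
    ENNReal.ofReal_lt_top

theorem limsup_ofReal_eq_top_of_tendsto_atTop {α : Type*} {l : Filter α} [l.NeBot] {f : α → ℝ}
    (h : Tendsto f l atTop) : limsup (fun x => ENNReal.ofReal (f x)) l = ⊤ :=
  (ENNReal.tendsto_ofReal_atTop.comp h).limsup_eq

/-- Stability criterion: with `σ(t) = e^{−2κt} ∑_{m≥1} (wt)^{2m}/(m!)²`,
if `κ ≥ w` then `σ` is bounded on `[0,∞)`, if `κ < w` then `σ(t) → ∞`;
in particular `limsup_{t→∞} σ(t) < ∞ ↔ κ ≥ w`. -/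
theorem stmt3 (κ w : ℝ) (hw : 0 < w)
    (σ : ℝ → ℝ)
    (hσ : ∀ t : ℝ, σ t = Real.exp (-2 * κ * t) *
      ∑' m : ℕ, (w * t) ^ (2 * (m + 1)) / ((Nat.factorial (m + 1) : ℝ)) ^ 2) :
    (w ≤ κ → ∃ M : ℝ, ∀ t : ℝ, 0 ≤ t → σ t ≤ M) ∧
    (κ < w → Tendsto σ atTop atTop) ∧
    (Filter.limsup (fun t => ENNReal.ofReal (σ t)) atTop < ⊤ ↔ w ≤ κ) := by
  obtain rfl : σ = fun t => exp (-2 * κ * t) * (besselI0TwoMul (w * t) - 1) :=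
    funext fun t => by rw [hσ, tsum_succ_eq_besselI0TwoMul_sub_one]
  have bounded (hκ : w ≤ κ) (t : ℝ) (ht : 0 ≤ t) :=
    exp_mul_besselI0TwoMul_sub_one_le_one hw.le hκ ht
  have unbounded (hκ : κ < w) := tendsto_exp_mul_besselI0TwoMul_sub_one_atTop hw hκ
  refine ⟨fun hκ => ⟨1, bounded hκ⟩, unbounded, fun hlim => ?_, fun hκ => ?_⟩
  · by_contra hκ
    rw [limsup_ofReal_eq_top_of_tendsto_atTop (unbounded (not_le.1 hκ))] at hlim
    exact lt_irrefl _ hlim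
  · exact limsup_ofReal_lt_top_of_eventually_le ((eventually_ge_atTop 0).mono (bounded hκ))
end

section
/- Let R_n : [0,T]² → ℝ be continuous functions satisfying |R_n(t,s) − 1 − w² ∫₀^t ∫₀^s R_n(t′,s′) dt′ ds′| ≤ C n^{−1/2} uniformly on [0,T]², with sup_n sup_{[0,T]²} |R_n| < ∞. Then R_n converges uniformly on [0,T]² to R(t,s) = 1 + ∑_{m=1}^∞ (wt)^m(ws)^m/(m!)². -/
open Real Set Filter

open Topology intervalIntegral

lemma volterra_poly_int (a t s : ℝ) (c : ℕ → ℝ) (N : ℕ) :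
    a * ∫ t' in (0:ℝ)..t, ∫ s' in (0:ℝ)..s,
      ∑ m ∈ Finset.range N, c m * (a * t' * s') ^ m / (Nat.factorial m : ℝ) ^ 2
    = ∑ m ∈ Finset.range N, c m * (a * t * s) ^ (m + 1) / (Nat.factorial (m+1) : ℝ) ^ 2 := by
  have inner : ∀ t' : ℝ, (∫ s' in (0:ℝ)..s,
      ∑ m ∈ Finset.range N, c m * (a * t' * s') ^ m / (Nat.factorial m : ℝ) ^ 2)
      = ∑ m ∈ Finset.range N,
        (c m * a ^ m * s ^ (m+1) / ((Nat.factorial m : ℝ) ^ 2 * (m+1))) * t' ^ m := by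
    intro t'
    rw [intervalIntegral.integral_finset_sum (fun m _ => by
      apply Continuous.intervalIntegrable; fun_prop)]
    refine Finset.sum_congr rfl fun m _ => ?_
    have h : ∀ s' : ℝ, c m * (a * t' * s') ^ m / (Nat.factorial m : ℝ) ^ 2
        = (c m * (a * t') ^ m / (Nat.factorial m : ℝ) ^ 2) * s' ^ m := by
      intro s'; rw [mul_pow]; ring
    simp only [h]
    rw [intervalIntegral.integral_const_mul, integral_pow]
    have h2 : (Nat.factorial m : ℝ) ≠ 0 := Nat.cast_ne_zero.2 (Nat.factorial_ne_zero m)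
    have h3 : ((m : ℝ) + 1) ≠ 0 := by positivity
    rw [mul_pow]
    field_simp
    ring
  simp only [inner]
  rw [intervalIntegral.integral_finset_sum (fun m _ => by
      apply Continuous.intervalIntegrable; fun_prop), Finset.mul_sum]
  refine Finset.sum_congr rfl fun m _ => ?_
  rw [intervalIntegral.integral_const_mul, integral_pow]
  have h1 : (Nat.factorial (m+1) : ℝ) = (m+1) * (Nat.factorial m : ℝ) := by
    rw [Nat.factorial_succ]; push_cast; ring
  have h2 : (Nat.factorial m : ℝ) ≠ 0 := Nat.cast_ne_zero.2 (Nat.factorial_ne_zero m)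
  have h3 : ((m : ℝ) + 1) ≠ 0 := by positivity
  rw [h1, mul_pow]
  field_simp
  ring

noncomputable def volP (a : ℝ) (K : ℕ) (t s : ℝ) : ℝ :=
  ∑ m ∈ Finset.range K, (a * t * s) ^ m / (Nat.factorial m : ℝ) ^ 2

noncomputable def volQ (a ε M : ℝ) (K : ℕ) (t s : ℝ) : ℝ :=
  ∑ m ∈ Finset.range (K + 1),
    (if m = K then M else ε) * (a * t * s) ^ m / (Nat.factorial m : ℝ) ^ 2

lemma volP_cont (a : ℝ) (K : ℕ) : Continuous fun q : ℝ × ℝ => volP a K q.1 q.2 := by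
  unfold volP; fun_prop

lemma volQ_cont (a ε M : ℝ) (K : ℕ) : Continuous fun q : ℝ × ℝ => volQ a ε M K q.1 q.2 := by
  unfold volQ; fun_prop

lemma volP_succ (a t s : ℝ) (K : ℕ) :
    volP a (K + 1) t s
      = 1 + a * ∫ t' in (0:ℝ)..t, ∫ s' in (0:ℝ)..s, volP a K t' s' := by
  have h : a * (∫ t' in (0:ℝ)..t, ∫ s' in (0:ℝ)..s,
      ∑ m ∈ Finset.range K, (a * t' * s') ^ m / (Nat.factorial m : ℝ) ^ 2)
      = ∑ m ∈ Finset.range K, (a * t * s) ^ (m + 1) / (Nat.factorial (m+1) : ℝ) ^ 2 := by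
    simpa only [one_mul] using volterra_poly_int a t s (fun _ => 1) K
  unfold volP
  rw [h, Finset.sum_range_succ']
  simp [add_comm]

lemma volQ_succ (a t s ε M : ℝ) (K : ℕ) :
    volQ a ε M (K + 1) t s
      = ε + a * ∫ t' in (0:ℝ)..t, ∫ s' in (0:ℝ)..s, volQ a ε M K t' s' := by
  have h := volterra_poly_int a t s (fun m => if m = K then M else ε) (K + 1)
  unfold volQ
  rw [h, Finset.sum_range_succ']
  simp only [Nat.succ_ne_zero, eq_comm (a := (0:ℕ))]
  simp [Nat.succ_inj]
  ring

lemma vol_key (w T M ε : ℝ) (hT : 0 < T) (hε : 0 ≤ ε) (f : ℝ → ℝ → ℝ)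
    (hf : Continuous fun q : ℝ × ℝ => f q.1 q.2)
    (hbdd : ∀ t ∈ Icc (0:ℝ) T, ∀ s ∈ Icc (0:ℝ) T, |f t s| ≤ M)
    (heq : ∀ t ∈ Icc (0:ℝ) T, ∀ s ∈ Icc (0:ℝ) T,
      |f t s - 1 - w ^ 2 * ∫ t' in (0:ℝ)..t, ∫ s' in (0:ℝ)..s, f t' s'| ≤ ε) :
    ∀ K : ℕ, ∀ t ∈ Icc (0:ℝ) T, ∀ s ∈ Icc (0:ℝ) T,
      |f t s - volP (w ^ 2) K t s| ≤ volQ (w ^ 2) ε M K t s := by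
  intro K
  induction K with
  | zero =>
    intro t ht s hs
    simpa [volP, volQ] using hbdd t ht s hs
  | succ K IH =>
    intro t ht s hs
    have ht0 : (0:ℝ) ≤ t := ht.1
    have hs0 : (0:ℝ) ≤ s := hs.1
    -- continuity facts
    have hfc : ∀ t' : ℝ, Continuous fun s' => f t' s' :=
      fun t' => hf.comp (continuous_const.prodMk continuous_id)
    have hPc : ∀ t' : ℝ, Continuous fun s' => volP (w ^ 2) K t' s' :=
      fun t' => (volP_cont (w ^ 2) K).comp (continuous_const.prodMk continuous_id)
    have hQc : ∀ t' : ℝ, Continuous fun s' => volQ (w ^ 2) ε M K t' s' :=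
      fun t' => (volQ_cont (w ^ 2) ε M K).comp (continuous_const.prodMk continuous_id)
    -- parametric integrals are continuous
    have hfI : Continuous fun t' => ∫ s' in (0:ℝ)..s, f t' s' :=
      intervalIntegral.continuous_parametric_intervalIntegral_of_continuous' hf 0 s
    have hPI : Continuous fun t' => ∫ s' in (0:ℝ)..s, volP (w ^ 2) K t' s' :=
      intervalIntegral.continuous_parametric_intervalIntegral_of_continuous'
        (f := fun t' s' => volP (w ^ 2) K t' s') (volP_cont (w ^ 2) K) 0 s
    have hQI : Continuous fun t' => ∫ s' in (0:ℝ)..s, volQ (w ^ 2) ε M K t' s' :=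
      intervalIntegral.continuous_parametric_intervalIntegral_of_continuous'
        (f := fun t' s' => volQ (w ^ 2) ε M K t' s') (volQ_cont (w ^ 2) ε M K) 0 s
    -- the inner bound
    have inner_bound : ∀ t' ∈ Icc (0:ℝ) T,
        |(∫ s' in (0:ℝ)..s, f t' s') - ∫ s' in (0:ℝ)..s, volP (w ^ 2) K t' s'|
          ≤ ∫ s' in (0:ℝ)..s, volQ (w ^ 2) ε M K t' s' := by
      intro t' ht'
      rw [← intervalIntegral.integral_sub ((hfc t').intervalIntegrable 0 s)
        ((hPc t').intervalIntegrable 0 s)]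
      refine le_trans (intervalIntegral.abs_integral_le_integral_abs hs0) ?_
      refine intervalIntegral.integral_mono_on hs0
        (((hfc t').sub (hPc t')).abs.intervalIntegrable 0 s)
        ((hQc t').intervalIntegrable 0 s) ?_
      intro s' hs'
      exact IH t' ht' s' ⟨hs'.1, hs'.2.trans hs.2⟩
    -- the outer bound
    have outer_bound :
        |(∫ t' in (0:ℝ)..t, ∫ s' in (0:ℝ)..s, f t' s')
            - ∫ t' in (0:ℝ)..t, ∫ s' in (0:ℝ)..s, volP (w ^ 2) K t' s'|
          ≤ ∫ t' in (0:ℝ)..t, ∫ s' in (0:ℝ)..s, volQ (w ^ 2) ε M K t' s' := by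
      rw [← intervalIntegral.integral_sub (hfI.intervalIntegrable 0 t)
        (hPI.intervalIntegrable 0 t)]
      refine le_trans (intervalIntegral.abs_integral_le_integral_abs ht0) ?_
      refine intervalIntegral.integral_mono_on ht0
        ((hfI.sub hPI).abs.intervalIntegrable 0 t)
        (hQI.intervalIntegrable 0 t) ?_
      intro t' ht'
      exact inner_bound t' ⟨ht'.1, ht'.2.trans ht.2⟩
    -- assemble
    have key : f t s - volP (w ^ 2) (K + 1) t s
        = (f t s - 1 - w ^ 2 * ∫ t' in (0:ℝ)..t, ∫ s' in (0:ℝ)..s, f t' s')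
          + w ^ 2 * ((∫ t' in (0:ℝ)..t, ∫ s' in (0:ℝ)..s, f t' s')
            - ∫ t' in (0:ℝ)..t, ∫ s' in (0:ℝ)..s, volP (w ^ 2) K t' s') := by
      rw [volP_succ]; ring
    rw [key, volQ_succ]
    refine le_trans (abs_add_le _ _) (add_le_add (heq t ht s hs) ?_)
    rw [abs_mul, abs_pow, sq_abs]
    exact mul_le_mul_of_nonneg_left outer_bound (by positivity)

lemma vol_term_bound (a T t s : ℝ) (ha : 0 ≤ a) (ht : t ∈ Icc (0:ℝ) T) (hs : s ∈ Icc (0:ℝ) T)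
    (m : ℕ) :
    |(a * t * s) ^ m / (Nat.factorial m : ℝ) ^ 2| ≤ (a * T * T) ^ m / (Nat.factorial m : ℝ) := by
  have hf1 : (1:ℝ) ≤ (Nat.factorial m : ℝ) := by exact_mod_cast Nat.one_le_iff_ne_zero.2 (Nat.factorial_ne_zero m)
  have hfpos : (0:ℝ) < (Nat.factorial m : ℝ) := lt_of_lt_of_le one_pos hf1
  have hT0 : (0:ℝ) ≤ T := le_trans ht.1 ht.2
  have haT : (0:ℝ) ≤ a * T * T := mul_nonneg (mul_nonneg ha hT0) hT0
  rw [abs_div, abs_pow, abs_pow]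
  have habs : |a * t * s| ≤ a * T * T := by
    rw [abs_of_nonneg (mul_nonneg (mul_nonneg ha ht.1) hs.1)]
    have h1 : a * t ≤ a * T := mul_le_mul_of_nonneg_left ht.2 ha
    calc a * t * s ≤ a * T * s := mul_le_mul_of_nonneg_right h1 hs.1
      _ ≤ a * T * T := mul_le_mul_of_nonneg_left hs.2 (mul_nonneg ha hT0)
  refine div_le_div₀ (pow_nonneg haT m) (pow_le_pow_left₀ (abs_nonneg _) habs m) hfpos ?_
  rw [abs_of_nonneg hfpos.le]
  exact le_self_pow₀ hf1 two_ne_zero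

lemma volQ_bound (a T t s ε M : ℝ) (ha : 0 ≤ a) (hε : 0 ≤ ε) (hM : 0 ≤ M)
    (ht : t ∈ Icc (0:ℝ) T) (hs : s ∈ Icc (0:ℝ) T) (K : ℕ) :
    volQ a ε M K t s ≤ ε * Real.exp (a * T * T)
      + M * ((a * T * T) ^ K / (Nat.factorial K : ℝ)) := by
  unfold volQ
  rw [Finset.sum_range_succ]
  have h1 : ∀ m ∈ Finset.range K,
      (if m = K then M else ε) * (a * t * s) ^ m / (Nat.factorial m : ℝ) ^ 2
        ≤ ε * ((a * T * T) ^ m / (Nat.factorial m : ℝ)) := by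
    intro m hm
    rw [if_neg (Finset.mem_range.1 hm).ne]
    rw [mul_div_assoc]
    refine mul_le_mul_of_nonneg_left ?_ hε
    exact le_trans (le_abs_self _) (vol_term_bound a T t s ha ht hs m)
  have h2 : (if K = K then M else ε) * (a * t * s) ^ K / (Nat.factorial K : ℝ) ^ 2
      ≤ M * ((a * T * T) ^ K / (Nat.factorial K : ℝ)) := by
    rw [if_pos rfl, mul_div_assoc]
    exact mul_le_mul_of_nonneg_left
      (le_trans (le_abs_self _) (vol_term_bound a T t s ha ht hs K)) hM
  refine add_le_add (le_trans (Finset.sum_le_sum h1) ?_) h2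
  rw [← Finset.mul_sum]
  refine mul_le_mul_of_nonneg_left ?_ hε
  exact Real.sum_le_exp_of_nonneg
    (mul_nonneg (mul_nonneg ha (le_trans ht.1 ht.2)) (le_trans ht.1 ht.2)) K

/-- Perturbed Volterra iteration: if continuous `R_n` on `[0,T]²` satisfy the
integral equation up to an error `C n^{−1/2}` and are uniformly bounded, then
`R_n` converges uniformly on `[0,T]²` to `R(t,s) = 1 + ∑_{m≥1}(wt)^m(ws)^m/(m!)²`. -/
theorem stmt5 (w T C : ℝ) (hw : 0 < w) (hT : 0 < T) (hC : 0 < C)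
    (R : ℕ → ℝ → ℝ → ℝ)
    (hRcont : ∀ n, ContinuousOn (fun q : ℝ × ℝ => R n q.1 q.2) (Icc (0:ℝ) T ×ˢ Icc (0:ℝ) T))
    (hRbdd : ∃ M : ℝ, ∀ n : ℕ, ∀ t ∈ Icc (0:ℝ) T, ∀ s ∈ Icc (0:ℝ) T, |R n t s| ≤ M)
    (hReq : ∀ n : ℕ, 0 < n → ∀ t ∈ Icc (0:ℝ) T, ∀ s ∈ Icc (0:ℝ) T,
      |R n t s - 1 - w ^ 2 * ∫ t' in (0:ℝ)..t, ∫ s' in (0:ℝ)..s, R n t' s'|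
        ≤ C * (n : ℝ) ^ (-(1:ℝ)/2)) :
    TendstoUniformlyOn (fun (n : ℕ) (q : ℝ × ℝ) => R n q.1 q.2)
      (fun q : ℝ × ℝ => 1 + ∑' m : ℕ, (w * q.1) ^ (m + 1) * (w * q.2) ^ (m + 1) /
        ((Nat.factorial (m + 1) : ℝ)) ^ 2)
      atTop (Icc (0:ℝ) T ×ˢ Icc (0:ℝ) T) := by
  obtain ⟨M, hM⟩ := hRbdd
  have hM0 : (0:ℝ) ≤ M :=
    le_trans (abs_nonneg _) (hM 0 0 ⟨le_refl _, hT.le⟩ 0 ⟨le_refl _, hT.le⟩)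
  -- continuous extensions
  have hext : ∀ n : ℕ, ∃ F : ℝ × ℝ → ℝ, Continuous F ∧
      ∀ q ∈ Icc (0:ℝ) T ×ˢ Icc (0:ℝ) T, F q = R n q.1 q.2 := by
    intro n
    have hcl : IsClosed (Icc (0:ℝ) T ×ˢ Icc (0:ℝ) T) := isClosed_Icc.prod isClosed_Icc
    obtain ⟨g, hg⟩ := ContinuousMap.exists_restrict_eq (Y := ℝ) hcl
      ⟨_, (hRcont n).restrict⟩
    exact ⟨g, g.continuous, fun q hq => ContinuousMap.congr_fun hg ⟨q, hq⟩⟩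
  choose F hFc hFeq using hext
  -- the integrals of R and F agree
  have hIeq : ∀ n : ℕ, ∀ t ∈ Icc (0:ℝ) T, ∀ s ∈ Icc (0:ℝ) T,
      (∫ t' in (0:ℝ)..t, ∫ s' in (0:ℝ)..s, R n t' s')
        = ∫ t' in (0:ℝ)..t, ∫ s' in (0:ℝ)..s, F n (t', s') := by
    intro n t ht s hs
    apply intervalIntegral.integral_congr
    intro t' ht'
    rw [uIcc_of_le ht.1] at ht'
    apply intervalIntegral.integral_congr
    intro s' hs'
    rw [uIcc_of_le hs.1] at hs'
    exact (hFeq n (t', s')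
      ⟨⟨ht'.1, ht'.2.trans ht.2⟩, ⟨hs'.1, hs'.2.trans hs.2⟩⟩).symm
  -- key estimate
  have hkey : ∀ K : ℕ, ∀ n : ℕ, 0 < n → ∀ t ∈ Icc (0:ℝ) T, ∀ s ∈ Icc (0:ℝ) T,
      |R n t s - volP (w ^ 2) K t s|
        ≤ volQ (w ^ 2) (C * (n : ℝ) ^ (-(1:ℝ)/2)) M K t s := by
    intro K n hn t ht s hs
    have hb : ∀ t ∈ Icc (0:ℝ) T, ∀ s ∈ Icc (0:ℝ) T, |F n (t, s)| ≤ M := by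
      intro t ht s hs
      rw [hFeq n (t, s) ⟨ht, hs⟩]
      exact hM n t ht s hs
    have he : ∀ t ∈ Icc (0:ℝ) T, ∀ s ∈ Icc (0:ℝ) T,
        |F n (t, s) - 1 - w ^ 2 * ∫ t' in (0:ℝ)..t, ∫ s' in (0:ℝ)..s, F n (t', s')|
          ≤ C * (n : ℝ) ^ (-(1:ℝ)/2) := by
      intro t ht s hs
      rw [← hIeq n t ht s hs, hFeq n (t, s) ⟨ht, hs⟩]
      exact hReq n hn t ht s hs
    have h := vol_key w T M (C * (n : ℝ) ^ (-(1:ℝ)/2)) hT (by positivity)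
      (fun t s => F n (t, s)) (hFc n) hb he K t ht s hs
    have h2 : F n (t, s) = R n t s := hFeq n (t, s) ⟨ht, hs⟩
    simpa only [h2] using h
  -- summability
  have hgsum : ∀ t s : ℝ,
      Summable (fun m : ℕ => (w ^ 2 * t * s) ^ m / (Nat.factorial m : ℝ) ^ 2) := by
    intro t s
    refine Summable.of_norm_bounded
      (Real.summable_pow_div_factorial |w ^ 2 * t * s|) fun m => ?_
    have hf1 : (1:ℝ) ≤ (Nat.factorial m : ℝ) := by
      exact_mod_cast Nat.one_le_iff_ne_zero.2 (Nat.factorial_ne_zero m)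
    have hfpos : (0:ℝ) < (Nat.factorial m : ℝ) := lt_of_lt_of_le one_pos hf1
    rw [Real.norm_eq_abs, abs_div, abs_pow, abs_pow, abs_of_nonneg hfpos.le]
    exact div_le_div₀ (pow_nonneg (abs_nonneg _) m) le_rfl hfpos (le_self_pow₀ hf1 two_ne_zero)
  -- the limit function rewritten
  have hlimit : ∀ t s : ℝ,
      (1 + ∑' m : ℕ, (w * t) ^ (m + 1) * (w * s) ^ (m + 1) /
          ((Nat.factorial (m + 1) : ℝ)) ^ 2)
        = ∑' m : ℕ, (w ^ 2 * t * s) ^ m / (Nat.factorial m : ℝ) ^ 2 := by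
    intro t s
    have hterm : ∀ m : ℕ, (w * t) ^ (m + 1) * (w * s) ^ (m + 1) /
        ((Nat.factorial (m + 1) : ℝ)) ^ 2
        = (w ^ 2 * t * s) ^ (m + 1) / (Nat.factorial (m + 1) : ℝ) ^ 2 := by
      intro m
      rw [← mul_pow, show w * t * (w * s) = w ^ 2 * t * s by ring]
    rw [tsum_congr hterm, ← Summable.sum_add_tsum_nat_add 1 (hgsum t s)]
    simp
  -- tail bound
  set h : ℕ → ℝ := fun m => (w ^ 2 * T * T) ^ m / (Nat.factorial m : ℝ) with hh_def
  have hh : Summable h := Real.summable_pow_div_factorial _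
  have htail : ∀ K : ℕ, ∀ t ∈ Icc (0:ℝ) T, ∀ s ∈ Icc (0:ℝ) T,
      |(∑' m : ℕ, (w ^ 2 * t * s) ^ m / (Nat.factorial m : ℝ) ^ 2) - volP (w ^ 2) K t s|
        ≤ ∑' m : ℕ, h (m + K) := by
    intro K t ht s hs
    have h1 : (∑' m : ℕ, (w ^ 2 * t * s) ^ m / (Nat.factorial m : ℝ) ^ 2)
        - volP (w ^ 2) K t s
        = ∑' m : ℕ, (w ^ 2 * t * s) ^ (m + K) / (Nat.factorial (m + K) : ℝ) ^ 2 := by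
      rw [volP, ← Summable.sum_add_tsum_nat_add K (hgsum t s)]
      ring
    rw [h1]
    have hsh : Summable fun m : ℕ => h (m + K) := (summable_nat_add_iff K).2 hh
    have hb : ∀ m : ℕ,
        |(w ^ 2 * t * s) ^ (m + K) / (Nat.factorial (m + K) : ℝ) ^ 2| ≤ h (m + K) :=
      fun m => vol_term_bound (w ^ 2) T t s (by positivity) ht hs (m + K)
    have hsabs : Summable fun m : ℕ =>
        |(w ^ 2 * t * s) ^ (m + K) / (Nat.factorial (m + K) : ℝ) ^ 2| :=
      Summable.of_nonneg_of_le (fun m => abs_nonneg _) hb hsh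
    calc |∑' m : ℕ, (w ^ 2 * t * s) ^ (m + K) / (Nat.factorial (m + K) : ℝ) ^ 2|
        ≤ ∑' m : ℕ, |(w ^ 2 * t * s) ^ (m + K) / (Nat.factorial (m + K) : ℝ) ^ 2| := by
          have := norm_tsum_le_tsum_norm (f := fun m : ℕ =>
            (w ^ 2 * t * s) ^ (m + K) / (Nat.factorial (m + K) : ℝ) ^ 2)
            (by simp only [Real.norm_eq_abs]; exact hsabs)
          simp only [Real.norm_eq_abs] at this
          exact this
      _ ≤ ∑' m : ℕ, h (m + K) := Summable.tsum_le_tsum hb hsabs hsh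
  -- finish
  rw [Metric.tendstoUniformlyOn_iff]
  intro δ hδ
  have hc1 : Tendsto (fun K : ℕ => M * h K + ∑' m : ℕ, h (m + K)) atTop (𝓝 0) := by
    have h1 := (hh.tendsto_atTop_zero.const_mul M).add (tendsto_sum_nat_add h)
    simpa using h1
  obtain ⟨K, hK⟩ := (hc1.eventually (gt_mem_nhds (half_pos hδ))).exists
  have hc2 : Tendsto (fun n : ℕ => C * (n : ℝ) ^ (-(1:ℝ)/2) * Real.exp (w ^ 2 * T * T))
      atTop (𝓝 0) := by
    have h0 : Tendsto (fun n : ℕ => ((n : ℝ)) ^ (-(1:ℝ)/2)) atTop (𝓝 0) := by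
      have := (tendsto_rpow_neg_atTop (y := 1/2) (by norm_num)).comp
        tendsto_natCast_atTop_atTop (α := ℕ)
      simpa [neg_div, Function.comp_def] using this
    simpa using (h0.const_mul C).mul_const (Real.exp (w ^ 2 * T * T))
  filter_upwards [hc2.eventually (gt_mem_nhds (half_pos hδ)), eventually_gt_atTop 0]
    with n hn1 hn2
  intro q hq
  obtain ⟨hq1, hq2⟩ := hq
  rw [Real.dist_eq]
  have e1 := htail K q.1 hq1 q.2 hq2
  have e2 := hkey K n hn2 q.1 hq1 q.2 hq2
  have e3 := volQ_bound (w ^ 2) T q.1 q.2 (C * (n : ℝ) ^ (-(1:ℝ)/2)) M (by positivity)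
    (by positivity) hM0 hq1 hq2 K
  have e4 : |(1 + ∑' m : ℕ, (w * q.1) ^ (m + 1) * (w * q.2) ^ (m + 1) /
        ((Nat.factorial (m + 1) : ℝ)) ^ 2) - R n q.1 q.2|
      ≤ |(∑' m : ℕ, (w ^ 2 * q.1 * q.2) ^ m / (Nat.factorial m : ℝ) ^ 2)
          - volP (w ^ 2) K q.1 q.2|
        + |R n q.1 q.2 - volP (w ^ 2) K q.1 q.2| := by
    rw [hlimit q.1 q.2]
    calc |(∑' m : ℕ, (w ^ 2 * q.1 * q.2) ^ m / (Nat.factorial m : ℝ) ^ 2) - R n q.1 q.2|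
        ≤ |(∑' m : ℕ, (w ^ 2 * q.1 * q.2) ^ m / (Nat.factorial m : ℝ) ^ 2)
            - volP (w ^ 2) K q.1 q.2|
          + |volP (w ^ 2) K q.1 q.2 - R n q.1 q.2| := abs_sub_le _ _ _
      _ = _ := by rw [abs_sub_comm (volP (w ^ 2) K q.1 q.2)]
  have := le_trans e4 (add_le_add e1 (le_trans e2 e3))
  refine lt_of_le_of_lt this ?_
  have : (∑' m : ℕ, h (m + K)) + (C * (n : ℝ) ^ (-(1:ℝ)/2) * Real.exp (w ^ 2 * T * T)
      + M * h K) < δ := by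
    have htp : (0:ℝ) ≤ ∑' m : ℕ, h (m + K) := tsum_nonneg fun m => by
      rw [hh_def]; positivity
    linarith
  calc (∑' m : ℕ, h (m + K)) + (C * (n : ℝ) ^ (-(1:ℝ)/2) * Real.exp (w ^ 2 * T * T)
        + M * ((w ^ 2 * T * T) ^ K / (Nat.factorial K : ℝ))) 
      = (∑' m : ℕ, h (m + K)) + (C * (n : ℝ) ^ (-(1:ℝ)/2) * Real.exp (w ^ 2 * T * T)
        + M * h K) := by rw [hh_def]
    _ < δ := this
end

section
/- Let A be an n × n real matrix, c = (1,…,1), and x(t) = e^{tA} c. Fix k, and let A^{(k)} be the matrix obtained from A by setting to zero all entries in row k and column k, with x^{(k)}(t) = e^{tA^{(k)}} c. Then for j ≠ k: x_j(t) = x_j^{(k)}(t) + ∫₀^t ∑_{i ≠ k} (e^{(t−s)A^{(k)}})_{ji} A_{ik} x_k(s) ds. -/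
open Matrix Finset NormedSpace

/-!
Duhamel's formula: differentiating `s ↦ e^{(t-s)B} e^{sA}` gives `e^{(t-s)B} (A - B) e^{sA}`, so
`e^{tA} - e^{tB} = ∫₀ᵗ e^{(t-s)B} (A - B) e^{sA} ds` in any Banach algebra. For `B = A^{(k)}` the
vector `(A - B) x(s)` has entries `A_{ik} x_k(s)` off `k`, and its `k`-th entry does not contribute
to coordinate `j ≠ k`: column `k` of `B` vanishes, so `B` and hence `e^{(t-s)B}` are block
triangular for the partition `{k}, {k}ᶜ`.
-/

section Duhamel

variable {𝔸 : Type*} [NormedRing 𝔸] [NormedAlgebra ℝ 𝔸] [CompleteSpace 𝔸]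

theorem continuous_exp_sub_smul_mul_mul_exp_smul (a b c : 𝔸) (t : ℝ) :
    Continuous fun s : ℝ => exp ((t - s) • b) * c * exp (s • a) := by
  have hexp := fun d : 𝔸 => (differentiable_exp_smul_const ℝ d).continuous
  exact (((hexp b).comp (continuous_sub_left t)).mul continuous_const).mul (hexp a)

theorem exp_smul_sub_exp_smul_eq_integral (a b : 𝔸) (t : ℝ) :
    exp (t • a) - exp (t • b) = ∫ s in (0:ℝ)..t, exp ((t - s) • b) * (a - b) * exp (s • a) := by
  have hderiv : ∀ s : ℝ, HasDerivAt (fun u : ℝ => exp ((t - u) • b) * exp (u • a))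
      (exp ((t - s) • b) * (a - b) * exp (s • a)) s := fun s => by
    have hb : HasDerivAt (fun u : ℝ => exp ((t - u) • b)) (-(exp ((t - s) • b) * b)) s :=
      ((hasDerivAt_exp_smul_const b (t - s)).scomp s
        ((hasDerivAt_id s).const_sub t)).congr_deriv (neg_one_smul ℝ _)
    refine (hb.mul (hasDerivAt_exp_smul_const' a s)).congr_deriv ?_
    noncomm_ring
  rw [intervalIntegral.integral_eq_sub_of_hasDerivAt (fun s _ => hderiv s)
    ((continuous_exp_sub_smul_mul_mul_exp_smul a b (a - b) t).intervalIntegrable 0 t)]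
  simp

end Duhamel

namespace Matrix

variable {n : Type*} [Fintype n] [DecidableEq n]

theorem exp_apply_eq_zero_of_col_eq_zero {𝔸 : Type*} [Ring 𝔸] [TopologicalSpace 𝔸]
    [IsTopologicalRing 𝔸] [T2Space 𝔸] [Algebra ℚ 𝔸] {M : Matrix n n 𝔸} {j k : n}
    (hM : ∀ i ≠ k, M i k = 0) (hjk : j ≠ k) : exp M j k = 0 := by
  have hb : M.BlockTriangular fun i => if i = k then 0 else 1 := fun i l hlt => by
    by_cases hl : l = k <;> by_cases hi : i = k <;> simp_all
  exact hb.exp (by simp [hjk])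

theorem exp_smul_mulVec_apply_sub_eq_integral (A B : Matrix n n ℝ) (v : n → ℝ) (j : n) (t : ℝ) :
    (exp (t • A) *ᵥ v) j - (exp (t • B) *ᵥ v) j =
      ∫ s in (0:ℝ)..t, (exp ((t - s) • B) *ᵥ ((A - B) *ᵥ (exp (s • A) *ᵥ v))) j := by
  open scoped Matrix.Norms.Operator in
  let L : Matrix n n ℝ →L[ℝ] ℝ :=
    LinearMap.toContinuousLinearMap (LinearMap.proj j ∘ₗ (mulVecBilin ℝ ℝ).flip v)
  calc _ = L (exp (t • A) - exp (t • B)) := by simp [L]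
    _ = L (∫ s in (0:ℝ)..t, exp ((t - s) • B) * (A - B) * exp (s • A)) :=
      congrArg L (exp_smul_sub_exp_smul_eq_integral A B t)
    _ = ∫ s in (0:ℝ)..t, L (exp ((t - s) • B) * (A - B) * exp (s • A)) :=
      (L.intervalIntegral_comp_comm
        ((continuous_exp_sub_smul_mul_mul_exp_smul A B (A - B) t).intervalIntegrable 0 t)).symm
    _ = _ := intervalIntegral.integral_congr fun s _ => by
      change ((exp ((t - s) • B) * (A - B) * exp (s • A)) *ᵥ v) j = _
      simp only [mulVec_mulVec, Matrix.mul_assoc]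

theorem mulVec_sub_mulVec_apply_eq_sum_erase {α : Type*} [Ring α] {A B E : Matrix n n α}
    {k j : n} (hB : ∀ i l, B i l = if i = k ∨ l = k then 0 else A i l) (hE : E j k = 0)
    (y : n → α) :
    (E *ᵥ ((A - B) *ᵥ y)) j = ∑ i ∈ univ.erase k, E j i * A i k * y k := by
  have hcol : ∀ i ≠ k, ((A - B) *ᵥ y) i = A i k * y k := fun i hik => by
    rw [mulVec, dotProduct, Finset.sum_eq_single k]
    · simp [hB]
    · intro l _ hlk
      simp [hB, hik, hlk]
    · simp
  rw [mulVec, dotProduct, ← Finset.sum_erase (a := k) _ (by simp [hE])]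
  exact Finset.sum_congr rfl fun i hi => by rw [hcol i (Finset.ne_of_mem_erase hi), mul_assoc]

end Matrix

/-- Variation-of-constants decomposition (formula (repr) of the paper): with
`A^{(k)}` obtained from `A` by zeroing row and column `k`,
`x(t) = e^{tA}𝟙`, `x^{(k)}(t) = e^{tA^{(k)}}𝟙`, one has for `j ≠ k`
`x_j(t) = x_j^{(k)}(t) + ∫₀^t ∑_{i≠k} (e^{(t−s)A^{(k)}})_{ji} A_{ik} x_k(s) ds`. -/
theorem stmt18 (n : ℕ) (A : Matrix (Fin n) (Fin n) ℝ) (k : Fin n)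
    (Ak : Matrix (Fin n) (Fin n) ℝ)
    (hAk : ∀ i j, Ak i j = if i = k ∨ j = k then 0 else A i j)
    (x xk : ℝ → Fin n → ℝ)
    (hx : ∀ t, x t = (NormedSpace.exp (t • A)).mulVec (fun _ => (1:ℝ)))
    (hxk : ∀ t, xk t = (NormedSpace.exp (t • Ak)).mulVec (fun _ => (1:ℝ))) :
    ∀ j : Fin n, j ≠ k → ∀ t : ℝ,
      x t j = xk t j +
        ∫ s in (0:ℝ)..t, ∑ i ∈ Finset.univ.erase k,
          (NormedSpace.exp ((t - s) • Ak)) j i * A i k * x s k := by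
  intro j hjk t
  have hcol : ∀ s : ℝ, exp ((t - s) • Ak) j k = 0 := fun s =>
    exp_apply_eq_zero_of_col_eq_zero (fun i _ => by simp [hAk]) hjk
  rw [← sub_eq_iff_eq_add', hx, hxk, exp_smul_mulVec_apply_sub_eq_integral]
  refine intervalIntegral.integral_congr fun s _ => ?_
  rw [← hx s]
  exact mulVec_sub_mulVec_apply_eq_sum_erase hAk (hcol s) (x s)
end
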